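/- Theorem 3: In any disclosure game, an ordered partition (𝒜, ≤_P) of E satisfies the Corollary-2 conditions if and only if every A ∈ 𝒜 is the largest lower contour set minimizing ξ in E_A := E \ ∪{A′ ∈ 𝒜 : A′ <_P A}; that is, A is a lower contour set in E_A with ξ(A) ≤ ξ(L) for every lower contour set L in E_A, and every lower contour set L in E_A with ξ(L) = ξ(A) satisfies L ⊆ A. -/

import Mathlib

open scoped BigOperators

universe u

/-- A disclosure game: a countable evidence space `E` with a disclosure rule
(a preorder `r`, where `r m e` means message `m` is feasible for endowment `e`)
satisfying the lower-bound condition (A4′), a prior `π0 ∈ (0,1)`, evidence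
distributions `FG`, `FB` in each state, and a strictly increasing receiver
response `φ` on `[0,1]`. -/
structure DGame (E : Type u) where
  r : E → E → Prop
  r_refl : ∀ e, r e e
  r_trans : ∀ {a b c : E}, r a b → r b c → r a c
  a4 : ∀ f : ℕ → E, (∀ n, r (f (n + 1)) (f n)) → ∃ N, ∀ n ≥ N, r (f N) (f n)
  π0 : ℝ
  π0_pos : 0 < π0
  π0_lt_one : π0 < 1
  FG : E → ℝ
  FB : E → ℝ
  FG_nonneg : ∀ e, 0 ≤ FG e
  FB_nonneg : ∀ e, 0 ≤ FB e
  FG_hasSum : HasSum FG 1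
  FB_hasSum : HasSum FB 1
  FGB_pos : ∀ e, 0 < FG e + FB e
  φ : ℝ → ℝ
  φ_mono : StrictMonoOn φ (Set.Icc (0 : ℝ) 1)

namespace DGame

variable {E : Type u} (G : DGame E)

/-- The posterior belief `ν(A)` that the state is good conditional on the
evidence lying in `A`. -/
noncomputable def nu (A : Set E) : ℝ :=
  ((∑' e : A, G.FG e) * G.π0) /
    ((∑' e : A, G.FG e) * G.π0 + (∑' e : A, G.FB e) * (1 - G.π0))

/-- `ξ(A) = φ(ν(A))`. -/
noncomputable def xi (A : Set E) : ℝ := G.φ (G.nu A)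

/-- `L` is a (nonempty) lower contour set in `A`. -/
def IsLCS (A L : Set E) : Prop :=
  L.Nonempty ∧ L ⊆ A ∧ ∀ e ∈ L, ∀ e' ∈ A, G.r e' e → e' ∈ L

/-- The Theorem-1 conditions on a candidate value function `V`. -/
def Thm1Conds (V : E → ℝ) : Prop :=
  (∀ e e', G.r e e' → V e ≤ V e') ∧
  (∀ x ∈ Set.range V, G.xi (V ⁻¹' {x}) = x) ∧
  (∀ x ∈ Set.range V, ∀ L : Set E, G.IsLCS (V ⁻¹' {x}) L → x ≤ G.xi L)

/-- A truth-leaning equilibrium `(σ, act, μ)` of the disclosure game. -/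
structure Eqm where
  σ : E → E → ℝ
  act : E → ℝ
  μ : E → ℝ
  σ_nonneg : ∀ e m, 0 ≤ σ e m
  σ_hasSum : ∀ e, HasSum (σ e) 1
  feasible : ∀ e m, 0 < σ e m → G.r m e
  μ_mem : ∀ m, μ m ∈ Set.Icc (0 : ℝ) 1
  sender_opt : ∀ e m, 0 < σ e m → ∀ m', G.r m' e → act m' ≤ act m
  receiver_opt : ∀ m, act m = G.φ (μ m)
  bayes : ∀ m, (∃ e, 0 < σ e m) →
    μ m = (∑' e : {e : E // G.r m e}, σ e.1 m * G.FG e.1 * G.π0) /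
      (∑' e : {e : E // G.r m e}, σ e.1 m * (G.FG e.1 * G.π0 + G.FB e.1 * (1 - G.π0)))
  truth_leaning : ∀ e, (∀ m, G.r m e → act m ≤ act e) → σ e e = 1
  offpath : ∀ m, (¬ ∃ e, 0 < σ e m) → μ m = G.nu {m}

/-- `V` is the sender's value function of the equilibrium `Q`. -/
def IsValueFn (Q : G.Eqm) (V : E → ℝ) : Prop :=
  ∀ e m, 0 < Q.σ e m → V e = Q.act m

end DGame

/-- An ordered partition of `E`: a partition into nonempty cells together with
a total order on the cells. -/
structure OPart (E : Type u) where
  cells : Set (Set E)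
  cells_nonempty : ∀ A ∈ cells, A.Nonempty
  cover : ∀ e : E, ∃ A ∈ cells, e ∈ A
  disj : ∀ A ∈ cells, ∀ B ∈ cells, A ≠ B → Disjoint A B
  le : Set E → Set E → Prop
  le_refl : ∀ A ∈ cells, le A A
  le_trans : ∀ A ∈ cells, ∀ B ∈ cells, ∀ C ∈ cells, le A B → le B C → le A C
  le_antisymm : ∀ A ∈ cells, ∀ B ∈ cells, le A B → le B A → A = B
  le_total : ∀ A ∈ cells, ∀ B ∈ cells, le A B ∨ le B A

/-- The Corollary-2 conditions on an ordered partition. -/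
def Crl2Conds {E : Type u} (G : DGame E) (P : OPart E) : Prop :=
  (∀ A ∈ P.cells, ∀ B ∈ P.cells, P.le A B → A ≠ B → G.xi A < G.xi B) ∧
  (∀ A ∈ P.cells, ∀ B ∈ P.cells, ∀ e₁ ∈ A, ∀ e₂ ∈ B, G.r e₁ e₂ → P.le A B) ∧
  (∀ A ∈ P.cells, ∀ L : Set E, G.IsLCS A L → G.xi A ≤ G.xi L)

/-- The residual evidence set `E_A = E \ ⋃ {A' ∈ 𝒜 : A' <_P A}`. -/
def resid {E : Type u} (P : OPart E) (A : Set E) : Set E :=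
  Set.univ \ ⋃₀ {A' | A' ∈ P.cells ∧ P.le A' A ∧ A' ≠ A}

/-!
`ν(X) = goodMass X / mass X` is a ratio of two countably additive masses, so `ν` of a set is a
weighted average of `ν` over its intersections with the cells of `𝒜`.

(⇒) A lower contour set `L` of `E_A` meets only cells `B ≥ A`, and `L ∩ B` is a lower contour set
of `B`, so `ν(L ∩ B) ≥ ν(B) ≥ ν(A)`, strictly unless `B = A`. Averaging gives `ξ(L) ≥ ξ(A)`, with
equality only if `L ⊆ A`.

(⇐) If `e₁ ≼ e₂ ∈ B` with `e₁` in a later cell, then `e₁ ∈ E_B`, so `e₁ ∈ B` because `B` is a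
lower contour set of `E_B`; this is condition (2), and (3) follows since a lower contour set of a
lower contour set is one. For (1), let `A <_P B`. The cells of `[A, B]` may be densely ordered, so
instead of an induction put `S = sup ν` over them. For each such cell `C`, the union of the cells
of `[C, B]` is a lower contour set of `E_C`, so `ν(C)` is at most an average of `S` and `ν(B)` in
which `B` has weight at least `mass B / mass E`; taking the sup over `C` gives `S ≤ ν(B)`. Finally
the union of the cells of `[A, B]` is a lower contour set of `E_A` strictly larger than `A`, hence
`ν(A) < ν(⋃ [A, B]) ≤ S ≤ ν(B)`.
-/

theorem Summable.hasSum_tsum_inter_preimage {β γ : Type*} {f : β → ℝ} (hf : Summable f) (X : Set β)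
    (κ : β → γ) : HasSum (fun i ↦ ∑' b : ↥(X ∩ κ ⁻¹' {i}), f b) (∑' b : X, f b) := by
  have h := (hf.indicator X).hasSum.tsum_fiberwise κ
  simpa only [tsum_subtype, Set.indicator_indicator, Set.inter_comm] using h

namespace DGame

variable {E : Type u} (G : DGame E)

noncomputable def goodWeight (e : E) : ℝ := G.FG e * G.π0

noncomputable def weight (e : E) : ℝ := G.FG e * G.π0 + G.FB e * (1 - G.π0)

noncomputable def goodMass (X : Set E) : ℝ := ∑' e : X, G.goodWeight e

noncomputable def mass (X : Set E) : ℝ := ∑' e : X, G.weight e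

lemma goodWeight_nonneg (e : E) : 0 ≤ G.goodWeight e :=
  mul_nonneg (G.FG_nonneg e) G.π0_pos.le

lemma goodWeight_le_weight (e : E) : G.goodWeight e ≤ G.weight e :=
  le_add_of_nonneg_right (mul_nonneg (G.FB_nonneg e) (sub_nonneg.2 G.π0_lt_one.le))

lemma weight_pos (e : E) : 0 < G.weight e := by
  have hB := mul_nonneg (G.FB_nonneg e) (sub_pos.2 G.π0_lt_one).le
  rcases (G.FG_nonneg e).lt_or_eq with hG | hG
  · exact add_pos_of_pos_of_nonneg (mul_pos hG G.π0_pos) hB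
  · have : 0 < G.FB e := by linarith [G.FGB_pos e]
    simpa [weight, ← hG] using mul_pos this (sub_pos.2 G.π0_lt_one)

lemma summable_goodWeight : Summable G.goodWeight :=
  G.FG_hasSum.summable.mul_right _

lemma summable_weight : Summable G.weight :=
  G.summable_goodWeight.add (G.FB_hasSum.summable.mul_right _)

lemma goodMass_le_mass (X : Set E) : G.goodMass X ≤ G.mass X :=
  Summable.tsum_le_tsum (fun e ↦ G.goodWeight_le_weight e)
    (G.summable_goodWeight.subtype X) (G.summable_weight.subtype X)

lemma goodMass_nonneg (X : Set E) : 0 ≤ G.goodMass X :=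
  tsum_nonneg fun e ↦ G.goodWeight_nonneg e

lemma mass_nonneg (X : Set E) : 0 ≤ G.mass X :=
  tsum_nonneg fun e ↦ (G.weight_pos e).le

lemma mass_pos {X : Set E} (hX : X.Nonempty) : 0 < G.mass X :=
  Summable.tsum_pos (G.summable_weight.subtype X) (fun e ↦ (G.weight_pos e).le)
    ⟨_, hX.some_mem⟩ (G.weight_pos _)

lemma mass_le_mass_univ (X : Set E) : G.mass X ≤ G.mass Set.univ :=
  Summable.tsum_le_tsum_of_inj (Set.inclusion (Set.subset_univ X))
    (Set.inclusion_injective _) (fun e _ ↦ (G.weight_pos e).le) (fun _ ↦ le_rfl)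
    (G.summable_weight.subtype X) (G.summable_weight.subtype _)

lemma goodMass_union {X Y : Set E} (h : Disjoint X Y) :
    G.goodMass (X ∪ Y) = G.goodMass X + G.goodMass Y :=
  Summable.tsum_union_disjoint h (G.summable_goodWeight.subtype X)
    (G.summable_goodWeight.subtype Y)

lemma mass_union {X Y : Set E} (h : Disjoint X Y) :
    G.mass (X ∪ Y) = G.mass X + G.mass Y :=
  Summable.tsum_union_disjoint h (G.summable_weight.subtype X) (G.summable_weight.subtype Y)

lemma nu_eq_goodMass_div_mass (X : Set E) : G.nu X = G.goodMass X / G.mass X := by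
  have hG : Summable fun e : X ↦ G.FG e * G.π0 :=
    (G.FG_hasSum.summable.subtype X).mul_right _
  have hB : Summable fun e : X ↦ G.FB e * (1 - G.π0) :=
    (G.FB_hasSum.summable.subtype X).mul_right _
  simp only [nu, goodMass, mass, weight, goodWeight, hG.tsum_add hB, tsum_mul_right]

lemma nu_mem_Icc (X : Set E) : G.nu X ∈ Set.Icc 0 1 := by
  rw [nu_eq_goodMass_div_mass]
  exact ⟨div_nonneg (G.goodMass_nonneg X) (G.mass_nonneg X),
    div_le_one_of_le₀ (G.goodMass_le_mass X) (G.mass_nonneg X)⟩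

lemma xi_le_xi_iff (X Y : Set E) : G.xi X ≤ G.xi Y ↔ G.nu X ≤ G.nu Y :=
  G.φ_mono.le_iff_le (G.nu_mem_Icc X) (G.nu_mem_Icc Y)

lemma xi_lt_xi_iff (X Y : Set E) : G.xi X < G.xi Y ↔ G.nu X < G.nu Y :=
  G.φ_mono.lt_iff_lt (G.nu_mem_Icc X) (G.nu_mem_Icc Y)

lemma lt_nu_iff {X : Set E} (hX : X.Nonempty) {c : ℝ} :
    c < G.nu X ↔ c * G.mass X < G.goodMass X := by
  rw [nu_eq_goodMass_div_mass, lt_div_iff₀ (G.mass_pos hX)]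

lemma mul_mass_le_goodMass_iff {X : Set E} {c : ℝ} :
    c * G.mass X ≤ G.goodMass X ↔ (X.Nonempty → c ≤ G.nu X) := by
  rcases X.eq_empty_or_nonempty with rfl | hX
  · simp [goodMass, mass]
  · rw [nu_eq_goodMass_div_mass, le_div_iff₀ (G.mass_pos hX)]
    simp [hX]

lemma goodMass_le_mul_mass_iff {X : Set E} {c : ℝ} :
    G.goodMass X ≤ c * G.mass X ↔ (X.Nonempty → G.nu X ≤ c) := by
  rcases X.eq_empty_or_nonempty with rfl | hX
  · simp [goodMass, mass]
  · rw [nu_eq_goodMass_div_mass, div_le_iff₀ (G.mass_pos hX)]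
    simp [hX]

lemma goodMass_eq_nu_mul_mass {X : Set E} (hX : X.Nonempty) :
    G.goodMass X = G.nu X * G.mass X := by
  rw [nu_eq_goodMass_div_mass, div_mul_cancel₀ _ (G.mass_pos hX).ne']

lemma nu_mul_le_of_nu_le_nu_union {D V B : Set E} (hVB : Disjoint V B) (hB : B.Nonempty)
    {S : ℝ} (hDS : G.nu D ≤ S) (hVS : V.Nonempty → G.nu V ≤ S)
    (hDVB : G.nu D ≤ G.nu (V ∪ B)) :
    G.nu D * (G.mass B + G.mass Set.univ) ≤ G.nu B * G.mass B + S * G.mass Set.univ := by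
  have hD := G.mul_mass_le_goodMass_iff.2 fun _ ↦ hDVB
  rw [G.mass_union hVB, G.goodMass_union hVB, G.goodMass_eq_nu_mul_mass hB] at hD
  have hV := G.goodMass_le_mul_mass_iff.2 hVS
  have hVuniv := mul_le_mul_of_nonneg_left (G.mass_le_mass_univ V) (sub_nonneg.2 hDS)
  linarith

def IsLargestXiMinimizer (Y A : Set E) : Prop :=
  G.IsLCS Y A ∧ (∀ L : Set E, G.IsLCS Y L → G.xi A ≤ G.xi L) ∧
    (∀ L : Set E, G.IsLCS Y L → G.xi L = G.xi A → L ⊆ A)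

variable {G}

lemma IsLCS.trans {X Y L : Set E} (hX : G.IsLCS Y X) (hL : G.IsLCS X L) : G.IsLCS Y L :=
  ⟨hL.1, hL.2.1.trans hX.2.1,
    fun e he e' he' hr ↦ hL.2.2 e he e' (hX.2.2 e (hL.2.1 he) e' he' hr) hr⟩

lemma IsLCS.inter {X Y L : Set E} (hL : G.IsLCS Y L) (hXY : X ⊆ Y) (hLX : (L ∩ X).Nonempty) :
    G.IsLCS X (L ∩ X) :=
  ⟨hLX, Set.inter_subset_right, fun e he e' he' hr ↦ ⟨hL.2.2 e he.1 e' (hXY he') hr, he'⟩⟩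

end DGame

namespace OPart

variable {E : Type u} (P : OPart E)

noncomputable def cellOf (e : E) : Set E := (P.cover e).choose

lemma cellOf_mem_cells (e : E) : P.cellOf e ∈ P.cells := (P.cover e).choose_spec.1

lemma mem_cellOf (e : E) : e ∈ P.cellOf e := (P.cover e).choose_spec.2

lemma eq_of_mem_of_mem {A B : Set E} (hA : A ∈ P.cells) (hB : B ∈ P.cells) {e : E}
    (heA : e ∈ A) (heB : e ∈ B) : A = B :=
  by_contra fun hne ↦ Set.disjoint_left.1 (P.disj A hA B hB hne) heA heB

lemma cellOf_eq {A : Set E} (hA : A ∈ P.cells) {e : E} (he : e ∈ A) : P.cellOf e = A :=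
  P.eq_of_mem_of_mem (P.cellOf_mem_cells e) hA (P.mem_cellOf e) he

lemma inter_preimage_cellOf {A : Set E} (hA : A ∈ P.cells) (X : Set E) :
    X ∩ P.cellOf ⁻¹' {A} = X ∩ A :=
  Set.ext fun x ↦ and_congr_right fun _ ↦ ⟨fun hx ↦ hx ▸ P.mem_cellOf x, P.cellOf_eq hA⟩

lemma mem_cells_of_inter_preimage_cellOf {X A : Set E}
    (h : (X ∩ P.cellOf ⁻¹' {A}).Nonempty) : A ∈ P.cells := by
  obtain ⟨e, -, rfl⟩ := h
  exact P.cellOf_mem_cells e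

lemma le_of_mem_resid {A B : Set E} (hA : A ∈ P.cells) (hB : B ∈ P.cells) {e : E}
    (he : e ∈ resid P A) (heB : e ∈ B) : P.le A B := by
  refine (P.le_total A hA B hB).elim id fun hBA ↦ ?_
  obtain rfl | hne := eq_or_ne B A
  · exact hBA
  · exact (he.2 ⟨B, ⟨hB, hBA, hne⟩, heB⟩).elim

lemma subset_resid {A B : Set E} (hA : A ∈ P.cells) (hB : B ∈ P.cells) (hAB : P.le A B) :
    B ⊆ resid P A := by
  intro e he
  refine ⟨trivial, fun ⟨C, ⟨hC, hCA, hCne⟩, heC⟩ ↦ ?_⟩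
  obtain rfl := P.eq_of_mem_of_mem hC hB heC he
  exact hCne (P.le_antisymm C hC A hA hCA hAB)

def Icc (A B : Set E) : Set E := ⋃₀ {C | C ∈ P.cells ∧ P.le A C ∧ P.le C B}

lemma subset_Icc {A B C : Set E} (hC : C ∈ P.cells) (hAC : P.le A C) (hCB : P.le C B) :
    C ⊆ P.Icc A B :=
  Set.subset_sUnion_of_mem ⟨hC, hAC, hCB⟩

lemma le_and_le_of_mem_Icc {A B C : Set E} (hC : C ∈ P.cells) {e : E} (heC : e ∈ C)
    (he : e ∈ P.Icc A B) : P.le A C ∧ P.le C B := by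
  obtain ⟨D, ⟨hD, hAD, hDB⟩, heD⟩ := he
  obtain rfl := P.eq_of_mem_of_mem hC hD heC heD
  exact ⟨hAD, hDB⟩

lemma Icc_self {A : Set E} (hA : A ∈ P.cells) : P.Icc A A = A := by
  refine (P.subset_Icc hA (P.le_refl A hA) (P.le_refl A hA)).antisymm' ?_
  rintro e ⟨C, ⟨hC, hAC, hCA⟩, heC⟩
  rwa [P.le_antisymm A hA C hC hAC hCA]

lemma Icc_subset_resid {A B : Set E} (hA : A ∈ P.cells) : P.Icc A B ⊆ resid P A := by
  rintro e ⟨C, ⟨hC, hAC, -⟩, heC⟩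
  exact P.subset_resid hA hC hAC heC

def IsMonotone (G : DGame E) : Prop :=
  ∀ A ∈ P.cells, ∀ B ∈ P.cells, ∀ e₁ ∈ A, ∀ e₂ ∈ B, G.r e₁ e₂ → P.le A B

lemma isLCS_resid_Icc {G : DGame E} (hP : P.IsMonotone G) {A B : Set E} (hA : A ∈ P.cells)
    (hB : B ∈ P.cells) (hAB : P.le A B) : G.IsLCS (resid P A) (P.Icc A B) := by
  refine ⟨(P.cells_nonempty A hA).mono (P.subset_Icc hA (P.le_refl A hA) hAB),
    P.Icc_subset_resid hA, ?_⟩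
  rintro e ⟨C, ⟨hC, -, hCB⟩, heC⟩ e' he' hr
  have hC' := P.cellOf_mem_cells e'
  have hC'C : P.le (P.cellOf e') C := hP _ hC' C hC e' (P.mem_cellOf e') e heC hr
  exact P.subset_Icc hC' (P.le_of_mem_resid hA hC' he' (P.mem_cellOf e'))
    (P.le_trans _ hC' C hC B hB hC'C hCB) (P.mem_cellOf e')

end OPart

namespace DGame

variable {E : Type u} (G : DGame E) (P : OPart E)

lemma hasSum_goodMass_inter_cellOf (X : Set E) :
    HasSum (fun A ↦ G.goodMass (X ∩ P.cellOf ⁻¹' {A})) (G.goodMass X) :=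
  G.summable_goodWeight.hasSum_tsum_inter_preimage X P.cellOf

lemma hasSum_mass_inter_cellOf (X : Set E) :
    HasSum (fun A ↦ G.mass (X ∩ P.cellOf ⁻¹' {A})) (G.mass X) :=
  G.summable_weight.hasSum_tsum_inter_preimage X P.cellOf

lemma le_nu_of_forall_cell {X : Set E} (hX : X.Nonempty) {c : ℝ}
    (h : ∀ A ∈ P.cells, (X ∩ A).Nonempty → c ≤ G.nu (X ∩ A)) : c ≤ G.nu X := by
  refine G.mul_mass_le_goodMass_iff.1 ?_ hX
  refine hasSum_le (fun A ↦ G.mul_mass_le_goodMass_iff.2 fun hXA ↦ ?_)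
    ((G.hasSum_mass_inter_cellOf P X).mul_left c) (G.hasSum_goodMass_inter_cellOf P X)
  have hA := P.mem_cells_of_inter_preimage_cellOf hXA
  rw [P.inter_preimage_cellOf hA] at hXA ⊢
  exact h A hA hXA

lemma lt_nu_of_forall_cell {X : Set E} (hX : X.Nonempty) {c : ℝ}
    (h : ∀ A ∈ P.cells, (X ∩ A).Nonempty → c ≤ G.nu (X ∩ A)) {A : Set E} (hA : A ∈ P.cells)
    (hXA : (X ∩ A).Nonempty) (hlt : c < G.nu (X ∩ A)) : c < G.nu X := by
  rw [G.lt_nu_iff hX]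
  refine hasSum_lt (i := A) (fun B ↦ G.mul_mass_le_goodMass_iff.2 fun hXB ↦ ?_) ?_
    ((G.hasSum_mass_inter_cellOf P X).mul_left c) (G.hasSum_goodMass_inter_cellOf P X)
  · have hB := P.mem_cells_of_inter_preimage_cellOf hXB
    rw [P.inter_preimage_cellOf hB] at hXB ⊢
    exact h B hB hXB
  · rw [P.inter_preimage_cellOf hA]
    exact (G.lt_nu_iff hXA).1 hlt

lemma nu_le_of_forall_cell_subset {X : Set E} (hX : X.Nonempty) {c : ℝ}
    (h : ∀ A ∈ P.cells, (X ∩ A).Nonempty → A ⊆ X ∧ G.nu A ≤ c) : G.nu X ≤ c := by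
  refine G.goodMass_le_mul_mass_iff.1 ?_ hX
  refine hasSum_le (fun A ↦ G.goodMass_le_mul_mass_iff.2 fun hXA ↦ ?_)
    (G.hasSum_goodMass_inter_cellOf P X) ((G.hasSum_mass_inter_cellOf P X).mul_left c)
  have hA := P.mem_cells_of_inter_preimage_cellOf hXA
  rw [P.inter_preimage_cellOf hA] at hXA ⊢
  obtain ⟨hAX, hAc⟩ := h A hA hXA
  rwa [Set.inter_eq_right.2 hAX]

end DGame

namespace Crl2Conds

variable {E : Type u} {G : DGame E} {P : OPart E}

lemma nu_le_nu_inter (hP : Crl2Conds G P) {A B L : Set E} (hA : A ∈ P.cells)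
    (hB : B ∈ P.cells) (hL : G.IsLCS (resid P A) L) (hLB : (L ∩ B).Nonempty) :
    G.nu A ≤ G.nu (L ∩ B) ∧ (B ≠ A → G.nu A < G.nu (L ∩ B)) := by
  obtain ⟨e, heL, heB⟩ := hLB
  have hAB := P.le_of_mem_resid hA hB (hL.2.1 heL) heB
  have hBL : G.nu B ≤ G.nu (L ∩ B) := (G.xi_le_xi_iff _ _).1 <|
    hP.2.2 B hB _ (hL.inter (P.subset_resid hA hB hAB) ⟨e, heL, heB⟩)
  have hAB' : B ≠ A → G.nu A < G.nu B :=
    fun hne ↦ (G.xi_lt_xi_iff _ _).1 (hP.1 A hA B hB hAB hne.symm)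
  refine ⟨?_, fun hne ↦ (hAB' hne).trans_le hBL⟩
  obtain rfl | hne := eq_or_ne B A
  · exact hBL
  · exact (hAB' hne).le.trans hBL

lemma isLargestXiMinimizer (hP : Crl2Conds G P) {A : Set E} (hA : A ∈ P.cells) :
    G.IsLargestXiMinimizer (resid P A) A := by
  have hle : ∀ L, G.IsLCS (resid P A) L →
      ∀ B ∈ P.cells, (L ∩ B).Nonempty → G.nu A ≤ G.nu (L ∩ B) :=
    fun L hL B hB hLB ↦ (hP.nu_le_nu_inter hA hB hL hLB).1
  have hAA := P.isLCS_resid_Icc hP.2.1 hA hA (P.le_refl A hA)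
  rw [P.Icc_self hA] at hAA
  refine ⟨hAA, fun L hL ↦ ?_, fun L hL hLA e heL ↦ by_contra fun heA ↦ ?_⟩
  · exact (G.xi_le_xi_iff _ _).2 (G.le_nu_of_forall_cell P hL.1 (hle L hL))
  · have hB := P.cellOf_mem_cells e
    have hLB : (L ∩ P.cellOf e).Nonempty := ⟨e, heL, P.mem_cellOf e⟩
    have hlt := G.lt_nu_of_forall_cell P hL.1 (hle L hL) hB hLB
      ((hP.nu_le_nu_inter hA hB hL hLB).2 fun h ↦ heA (h ▸ P.mem_cellOf e))
    exact ((G.xi_lt_xi_iff _ _).2 hlt).ne' hLA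

end Crl2Conds

namespace DGame

variable {E : Type u} {G : DGame E} {P : OPart E}

lemma isMonotone_of_isLargestXiMinimizer
    (h : ∀ A ∈ P.cells, G.IsLargestXiMinimizer (resid P A) A) : P.IsMonotone G := by
  intro A hA B hB e₁ he₁ e₂ he₂ hr
  by_contra hAB
  have hBA := (P.le_total A hA B hB).resolve_left hAB
  have he₁B : e₁ ∈ B := (h B hB).1.2.2 e₂ he₂ e₁ (P.subset_resid hB hA hBA he₁) hr
  exact hAB (P.eq_of_mem_of_mem hA hB he₁ he₁B ▸ P.le_refl A hA)

lemma nu_le_nu_of_isLargestXiMinimizer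
    (h : ∀ A ∈ P.cells, G.IsLargestXiMinimizer (resid P A) A) {A B : Set E}
    (hA : A ∈ P.cells) (hB : B ∈ P.cells) :
    ∀ C ∈ P.cells, P.le A C → P.le C B → G.nu C ≤ G.nu B := by
  have hm := isMonotone_of_isLargestXiMinimizer h
  set T := {C | C ∈ P.cells ∧ P.le A C ∧ P.le C B}
  set S := sSup (G.nu '' T)
  have hbdd : BddAbove (G.nu '' T) := ⟨1, by rintro _ ⟨C, -, rfl⟩; exact (G.nu_mem_Icc C).2⟩
  have hS : ∀ C ∈ T, G.nu C ≤ S := fun C hC ↦ le_csSup hbdd ⟨C, hC, rfl⟩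
  have hBne := P.cells_nonempty B hB
  have key : ∀ C ∈ T, G.nu C * (G.mass B + G.mass Set.univ) ≤
      G.nu B * G.mass B + S * G.mass Set.univ := by
    rintro C ⟨hC, hAC, hCB⟩
    refine G.nu_mul_le_of_nu_le_nu_union (V := P.Icc C B \ B) Set.disjoint_sdiff_left hBne
      (hS C ⟨hC, hAC, hCB⟩) (fun hV ↦ G.nu_le_of_forall_cell_subset P hV fun D hD hVD ↦ ?_) ?_
    · obtain ⟨e, ⟨heI, heB⟩, heD⟩ := hVD
      obtain ⟨hCD, hDB⟩ := P.le_and_le_of_mem_Icc hD heD heI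
      refine ⟨fun x hx ↦ ⟨P.subset_Icc hD hCD hDB hx, fun hxB ↦ heB ?_⟩,
        hS D ⟨hD, P.le_trans A hA C hC D hD hAC hCD, hDB⟩⟩
      exact P.eq_of_mem_of_mem hD hB hx hxB ▸ heD
    · rw [Set.sdiff_union_of_subset (P.subset_Icc hB hCB (P.le_refl B hB))]
      exact (G.xi_le_xi_iff _ _).1 ((h C hC).2.1 _ (P.isLCS_resid_Icc hm hC hB hCB))
  intro C hC hAC hCB
  have hmB := G.mass_pos hBne
  have hden : 0 < G.mass B + G.mass Set.univ := add_pos_of_pos_of_nonneg hmB (G.mass_nonneg _)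
  have hSB : S * (G.mass B + G.mass Set.univ) ≤ G.nu B * G.mass B + S * G.mass Set.univ := by
    rw [← le_div_iff₀ hden]
    refine csSup_le ⟨_, C, ⟨hC, hAC, hCB⟩, rfl⟩ ?_
    rintro _ ⟨D, hD, rfl⟩
    exact (le_div_iff₀ hden).2 (key D hD)
  exact (hS C ⟨hC, hAC, hCB⟩).trans (le_of_mul_le_mul_right (by linarith) hmB)

lemma nu_lt_nu_of_isLargestXiMinimizer
    (h : ∀ A ∈ P.cells, G.IsLargestXiMinimizer (resid P A) A) {A B : Set E}
    (hA : A ∈ P.cells) (hB : B ∈ P.cells) (hAB : P.le A B) (hne : A ≠ B) :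
    G.nu A < G.nu B := by
  have hI := P.isLCS_resid_Icc (isMonotone_of_isLargestXiMinimizer h) hA hB hAB
  have hAI : G.nu A < G.nu (P.Icc A B) := by
    refine ((G.xi_le_xi_iff _ _).1 ((h A hA).2.1 _ hI)).lt_of_ne fun hAI ↦ ?_
    obtain ⟨e, he⟩ := P.cells_nonempty B hB
    have heI := P.subset_Icc hB hAB (P.le_refl B hB) he
    exact hne (P.eq_of_mem_of_mem hA hB ((h A hA).2.2 _ hI (congrArg G.φ hAI.symm) heI) he)
  refine hAI.trans_le (G.nu_le_of_forall_cell_subset P hI.1 fun C hC hIC ↦ ?_)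
  obtain ⟨e, heI, heC⟩ := hIC
  obtain ⟨hAC, hCB⟩ := P.le_and_le_of_mem_Icc hC heC heI
  exact ⟨P.subset_Icc hC hAC hCB, nu_le_nu_of_isLargestXiMinimizer h hA hB C hC hAC hCB⟩

end DGame

theorem stmt_6_general {E : Type u} (G : DGame E) (P : OPart E) :
    Crl2Conds G P ↔
      ∀ A ∈ P.cells,
        G.IsLCS (resid P A) A ∧
        (∀ L : Set E, G.IsLCS (resid P A) L → G.xi A ≤ G.xi L) ∧
        (∀ L : Set E, G.IsLCS (resid P A) L → G.xi L = G.xi A → L ⊆ A) := by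
  refine ⟨fun hP A hA ↦ Crl2Conds.isLargestXiMinimizer hP hA,
    fun h ↦ ⟨fun A hA B hB hAB hne ↦ ?_, DGame.isMonotone_of_isLargestXiMinimizer h,
      fun A hA L hL ↦ (h A hA).2.1 L ((h A hA).1.trans hL)⟩⟩
  exact (G.xi_lt_xi_iff A B).2 (DGame.nu_lt_nu_of_isLargestXiMinimizer h hA hB hAB hne)

/-- Theorem 3: an ordered partition satisfies the Corollary-2 conditions iff
every cell `A` is the largest lower contour set minimizing `ξ` in
`E_A = E \ ⋃{A' : A' <_P A}`. -/
theorem stmt_6 {E : Type u} [Countable E] (G : DGame E) (P : OPart E) :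
    Crl2Conds G P ↔
      ∀ A ∈ P.cells,
        G.IsLCS (resid P A) A ∧
        (∀ L : Set E, G.IsLCS (resid P A) L → G.xi A ≤ G.xi L) ∧
        (∀ L : Set E, G.IsLCS (resid P A) L → G.xi L = G.xi A → L ⊆ A) :=
  stmt_6_general G P
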